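/- Let R ∈ F[[X]] and suppose that Q(X, 1, R(X)) ≠ 0 for every nonzero Q ∈ Q^{(n)} and every n ≥ 1, where Q^{(n)} is the set of polynomials Σ_{j<n} (T_{ω_j}(Y_1,Y_2) − T_{ω'_j}(Y_1,Y_2)) X^j. Then for every N ≥ 1 there exists n ≥ N with H(A_R^{(n)}; 4n) = n·H(p); that is, the first 4n coefficients of A_R^{(n)} determine the digits ξ_0,…,ξ_{n-1} and have full entropy. -/

import Mathlib

open Filter

/-- Shannon entropy of a discrete probability measure. -/
noncomputable def pmfEntropy {α : Type*} (q : PMF α) : ℝ :=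
  ∑' a, Real.negMulLog ((q a).toReal)

/-- Law of the word `(ξ_0, …, ξ_{n-1})` of `n` i.i.d. digits with common law `ξ`. -/
noncomputable def iidWord {m : ℕ} (ξ : PMF (Fin m)) : (n : ℕ) → PMF (Fin n → Fin m)
  | 0 => PMF.pure (fun i => i.elim0)
  | n + 1 => (iidWord ξ n).bind fun ω => ξ.map fun x => Fin.snoc ω x

/-- `A_R^{(n)}(ω) = Σ_{j<n} T_{ω_j}(1, R(X)) X^j ∈ F[[X]]`, where
`T_j(Y₁,Y₂) = a_j Y₁ + b_j Y₂`. -/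
noncomputable def ARfun {F : Type*} [Field F] {m : ℕ} (a b : Fin m → ℤ)
    (R : PowerSeries F) {n : ℕ} (ω : Fin n → Fin m) : PowerSeries F :=
  ∑ j : Fin n,
    ((PowerSeries.C ((a (ω j) : ℤ) : F)) + (PowerSeries.C ((b (ω j) : ℤ) : F)) * R) *
      PowerSeries.X ^ (j : ℕ)

/-- `H(A_R^{(n)}; k)`: the Shannon entropy of the first `k` coefficients of `A_R^{(n)}`. -/
noncomputable def Hcoeff {F : Type*} [Field F] {m : ℕ} (ξ : PMF (Fin m))
    (a b : Fin m → ℤ) (R : PowerSeries F) (n k : ℕ) : ℝ :=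
  pmfEntropy ((iidWord ξ n).map fun ω => fun i : Fin k => PowerSeries.coeff i (ARfun a b R ω))

/-!
Pushing a law forward along an injective map preserves its entropy, and a word of `n` i.i.d.
digits has entropy `n H(p)`; so it suffices to find `n ≥ N` for which the first `4n`
coefficients of `A_R^{(n)}` determine the word. If there were none, every `n ≥ N` would give a
nonzero linear form `L_n = p_n + q_n R` with `deg p_n, deg q_n < n` vanishing to order `4n`
(the difference of two colliding words). Consecutive forms are proportional,
`q_{n+1} L_n = q_n L_{n+1}`, because the cross term `q_{n+1} p_n - q_n p_{n+1}` is a polynomial of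
degree `< 2n + 1 ≤ 4n` vanishing to order `4n`. Hence `ord L_n - ord q_n` does not depend on
`n`, whereas it is at least `4n - n`.
-/

namespace PMF

variable {α β : Type*}

theorem map_apply_of_injective (q : PMF α) {f : α → β} (hf : f.Injective) (a : α) :
    q.map f (f a) = q a := by
  rw [map_apply, tsum_eq_single a fun a' ha' => if_neg fun h => ha' (hf h).symm, if_pos rfl]

theorem map_apply_of_notMem_range (q : PMF α) {f : α → β} {b : β} (hb : b ∉ Set.range f) :
    q.map f b = 0 := by
  rw [map_apply]
  exact ENNReal.tsum_eq_zero.mpr fun a => if_neg fun h => hb ⟨a, h.symm⟩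

theorem sum_toReal_eq_one [Fintype α] (q : PMF α) : ∑ a, (q a).toReal = 1 := by
  rw [← ENNReal.toReal_sum fun a _ => q.apply_ne_top a]
  simpa [tsum_fintype] using congrArg ENNReal.toReal q.tsum_coe

end PMF

theorem pmfEntropy_map_of_injective {α β : Type*} (q : PMF α) {f : α → β} (hf : f.Injective) :
    pmfEntropy (q.map f) = pmfEntropy q := by
  unfold pmfEntropy
  rw [← hf.tsum_eq fun b hb => ?_]
  · simp only [q.map_apply_of_injective hf]
  · by_contra hb'
    rw [Function.mem_support, q.map_apply_of_notMem_range hb'] at hb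
    simp at hb

theorem pmfEntropy_eq_sum {α : Type*} [Fintype α] (q : PMF α) :
    pmfEntropy q = ∑ a, Real.negMulLog (q a).toReal :=
  tsum_fintype _

theorem pmfEntropy_eq_add_of_apply_eq_mul {α β γ : Type*} [Fintype α] [Fintype β] [Fintype γ]
    (q : PMF α) (r : PMF β) (s : PMF γ) (e : α × β ≃ γ) (hs : ∀ x y, s (e (x, y)) = q x * r y) :
    pmfEntropy s = pmfEntropy q + pmfEntropy r := by
  simp only [pmfEntropy_eq_sum, ← e.sum_comp, Fintype.sum_prod_type, hs, ENNReal.toReal_mul,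
    Real.negMulLog_mul, Finset.sum_add_distrib, ← Finset.mul_sum, ← Finset.sum_mul,
    PMF.sum_toReal_eq_one, one_mul]

theorem iidWord_succ_snoc {m : ℕ} (ξ : PMF (Fin m)) (n : ℕ) (ω : Fin n → Fin m) (x : Fin m) :
    iidWord ξ (n + 1) (Fin.snoc ω x) = iidWord ξ n ω * ξ x := by
  rw [iidWord, PMF.bind_apply, tsum_eq_single ω fun ω' hω' => ?_]
  · exact congrArg _ (ξ.map_apply_of_injective (Fin.snoc_right_injective (α := fun _ => Fin m) ω) x)
  rw [PMF.map_apply_of_notMem_range, mul_zero]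
  rintro ⟨y, hy⟩
  exact hω' (Fin.snoc_injective2 hy).1

theorem pmfEntropy_iidWord {m : ℕ} (ξ : PMF (Fin m)) (n : ℕ) :
    pmfEntropy (iidWord ξ n) = n * pmfEntropy ξ := by
  induction n with
  | zero => simp [iidWord, pmfEntropy_eq_sum, PMF.pure_apply, eq_iff_true_of_subsingleton]
  | succ n ih =>
    rw [pmfEntropy_eq_add_of_apply_eq_mul ξ (iidWord ξ n) _ (Fin.snocEquiv fun _ => Fin m)
      fun x ω => (iidWord_succ_snoc ξ n ω x).trans (mul_comm _ _), ih]
    push_cast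
    ring

section

open Polynomial
open scoped PowerSeries

theorem Polynomial.eq_zero_of_degree_lt_of_le_order {R : Type*} [Semiring R] {p : R[X]} {n : ℕ}
    (hdeg : p.degree < n) (hord : n ≤ (p : R⟦X⟧).order) : p = 0 := by
  ext i
  rcases lt_or_ge i n with hi | hi
  · rw [← coeff_coe, PowerSeries.coeff_of_lt_order i ((Nat.cast_lt.mpr hi).trans_le hord),
      coeff_zero]
  · exact coeff_eq_zero_of_degree_lt (hdeg.trans_le (by exact_mod_cast hi))

theorem Polynomial.order_coe_le_natDegree {R : Type*} [Semiring R] {p : R[X]} (hp : p ≠ 0) :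
    (p : R⟦X⟧).order ≤ p.natDegree :=
  PowerSeries.order_le _ (by rwa [coeff_coe, coeff_natDegree, leadingCoeff_ne_zero])

theorem PowerSeries.min_order_le_order_sub {R : Type*} [Ring R] (φ ψ : R⟦X⟧) :
    min φ.order ψ.order ≤ (φ - ψ).order := by
  rw [sub_eq_add_neg, ← PowerSeries.order_neg ψ]
  exact PowerSeries.min_order_le_order_add _ _

variable {F : Type*} [Field F]

-- The cross term `q' p - p' q` is a polynomial of degree `< n + n'` vanishing to order `n + n'`.
theorem mul_linearForm_eq_mul_linearForm_of_le_order {R : F⟦X⟧} {p q p' q' : F[X]} {n n' : ℕ}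
    (hp : p.degree < n) (hq : q.degree < n) (hp' : p'.degree < n') (hq' : q'.degree < n')
    (hord : (n + n' : ℕ) ≤ ((p : F⟦X⟧) + q * R).order)
    (hord' : (n + n' : ℕ) ≤ ((p' : F⟦X⟧) + q' * R).order) :
    q' * ((p : F⟦X⟧) + q * R) = q * ((p' : F⟦X⟧) + q' * R) := by
  have hdeg : (q' * p - p' * q).degree < (n + n' : ℕ) := by
    have hlt : ∀ {r s : F[X]}, r.degree < n' → s.degree < n → (r * s).degree < (n + n' : ℕ) :=
      fun {r s} hr hs => by
        rcases eq_or_ne s 0 with rfl | hs0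
        · simp
        refine (degree_mul_le _ _).trans_lt ?_
        rw [Nat.cast_add, add_comm (n : WithBot ℕ)]
        exact WithBot.add_lt_add_of_lt_of_le (degree_ne_bot.mpr hs0) hr hs.le
    exact (degree_sub_le _ _).trans_lt (max_lt (hlt hq' hp) (hlt hp' hq))
  have hcoe : ((q' * p - p' * q : F[X]) : F⟦X⟧) =
      q' * ((p : F⟦X⟧) + q * R) - q * ((p' : F⟦X⟧) + q' * R) := by
    push_cast
    ring
  have hle_mul : ∀ (φ ψ : F⟦X⟧), ψ.order ≤ (φ * ψ).order := fun φ ψ =>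
    le_add_self.trans (PowerSeries.le_order_mul φ ψ)
  have hzero := eq_zero_of_degree_lt_of_le_order hdeg <| by
    rw [hcoe]
    exact (le_min (hord.trans (hle_mul _ _)) (hord'.trans (hle_mul _ _))).trans
      (PowerSeries.min_order_le_order_sub _ _)
  rw [← sub_eq_zero, ← hcoe, hzero, Polynomial.coe_zero]

theorem not_forall_exists_linearForm_order_ge (R : F⟦X⟧) {N : ℕ} (hN : 1 ≤ N) :
    ¬ ∀ n ≥ N, ∃ p q : F[X], p.degree < n ∧ q.degree < n ∧ (p + q * R : F⟦X⟧) ≠ 0 ∧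
      (4 * n : ℕ) ≤ ((p : F⟦X⟧) + q * R).order := by
  intro h
  choose p q hp hq hne hord using fun k => h (N + k) (Nat.le_add_right N k)
  set L : ℕ → F⟦X⟧ := fun k => p k + q k * R
  have hq0 : ∀ k, q k ≠ 0 := by
    intro k hqk
    have hpk : p k = 0 := eq_zero_of_degree_lt_of_le_order (hp k) <| by
      simpa [L, hqk] using (Nat.cast_le.mpr (by omega : N + k ≤ 4 * (N + k))).trans (hord k)
    exact hne k (by simp [hpk, hqk])
  have hcross : ∀ k, (q (k + 1) : F⟦X⟧) * L k = q k * L (k + 1) := fun k =>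
    mul_linearForm_eq_mul_linearForm_of_le_order (hp k) (hq k) (hp (k + 1)) (hq (k + 1))
      ((Nat.cast_le.mpr (by omega)).trans (hord k))
      ((Nat.cast_le.mpr (by omega)).trans (hord (k + 1)))
  have hinv : ∀ k, (q 0 : F⟦X⟧) * L k = q k * L 0 := by
    intro k
    induction k with
    | zero => rfl
    | succ k ih =>
      refine mul_left_cancel₀ (Polynomial.coe_eq_zero_iff.not.mpr (hq0 k)) ?_
      linear_combination (-(q 0 : F⟦X⟧)) * hcross k + (q (k + 1) : F⟦X⟧) * ih
  obtain ⟨d, hd⟩ := ENat.ne_top_iff_exists.mp (PowerSeries.order_eq_top.not.mpr (hne 0))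
  have hdeg : (q d).natDegree < N + d := (natDegree_lt_iff_degree_lt (hq0 d)).mpr (hq d)
  have hbound : ((4 * (N + d) : ℕ) : ℕ∞) ≤ ((q d).natDegree + d : ℕ) :=
    calc ((4 * (N + d) : ℕ) : ℕ∞) ≤ (L d).order := hord d
      _ ≤ (q 0 : F⟦X⟧).order + (L d).order := le_add_self
      _ = (q d : F⟦X⟧).order + (L 0).order := by
        rw [← PowerSeries.order_mul, ← PowerSeries.order_mul, hinv]
      _ ≤ ((q d).natDegree + d : ℕ) := by
        rw [← hd, Nat.cast_add]
        gcongr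
        exact order_coe_le_natDegree (hq0 d)
  norm_cast at hbound
  omega

theorem ARfun_sub {m n : ℕ} (a b : Fin m → ℤ) (R : F⟦X⟧) (ω ω' : Fin n → Fin m) :
    ARfun a b R ω - ARfun a b R ω' =
      ((∑ j : Fin n, C ((a (ω j) - a (ω' j) : ℤ) : F) * X ^ (j : ℕ) : F[X]) : F⟦X⟧) +
        ((∑ j : Fin n, C ((b (ω j) - b (ω' j) : ℤ) : F) * X ^ (j : ℕ) : F[X]) : F⟦X⟧) * R := by
  simp only [ARfun, ← coeToPowerSeries.ringHom_apply, map_sum, map_mul, map_pow]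
  simp only [coeToPowerSeries.ringHom_apply, coe_C, coe_X, Finset.sum_mul,
    ← Finset.sum_sub_distrib, ← Finset.sum_add_distrib]
  refine Finset.sum_congr rfl fun j _ => ?_
  rw [Int.cast_sub, Int.cast_sub, map_sub, map_sub]
  ring

theorem exists_le_injective_coeff_ARfun {m : ℕ} (a b : Fin m → ℤ) (R : F⟦X⟧)
    (hno : ∀ (n : ℕ) (ω ω' : Fin n → Fin m), ω ≠ ω' → ARfun a b R ω ≠ ARfun a b R ω')
    {N : ℕ} (hN : 1 ≤ N) :
    ∃ n ≥ N, Function.Injective fun (ω : Fin n → Fin m) (i : Fin (4 * n)) =>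
      PowerSeries.coeff i (ARfun a b R ω) := by
  by_contra! h
  refine not_forall_exists_linearForm_order_ge R hN fun n hn => ?_
  obtain ⟨ω, ω', hcoeff, hne⟩ := Function.not_injective_iff.mp (h n hn)
  refine ⟨_, _, degree_sum_fin_lt fun j => ((a (ω j) - a (ω' j) : ℤ) : F),
    degree_sum_fin_lt fun j => ((b (ω j) - b (ω' j) : ℤ) : F), ?_, ?_⟩ <;>
    rw [← ARfun_sub]
  · exact sub_ne_zero.mpr (hno n ω ω' hne)
  · refine PowerSeries.nat_le_order _ _ fun i hi => ?_
    rw [map_sub, sub_eq_zero]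
    exact congrFun hcoeff ⟨i, hi⟩

end

theorem stmt12_general {F : Type*} [Field F] {m : ℕ}
    (a b : Fin m → ℤ) (ξ : PMF (Fin m)) (R : PowerSeries F)
    (hno : ∀ (n : ℕ) (ω ω' : Fin n → Fin m), ω ≠ ω' → ARfun a b R ω ≠ ARfun a b R ω') :
    ∀ N : ℕ, 1 ≤ N → ∃ n, N ≤ n ∧ Hcoeff ξ a b R n (4 * n) = (n : ℝ) * pmfEntropy ξ := by
  intro N hN
  obtain ⟨n, hn, hinj⟩ := exists_le_injective_coeff_ARfun a b R hno hN
  exact ⟨n, hn, by rw [Hcoeff, pmfEntropy_map_of_injective _ hinj, pmfEntropy_iidWord]⟩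

/-- If `Q(X,1,R(X)) ≠ 0` for every nonzero `Q ∈ Q^{(n)}` and every `n` (equivalently,
distinct digit words always give distinct functions `A_R^{(n)}`), then for every `N ≥ 1`
there is `n ≥ N` such that the first `4n` coefficients of `A_R^{(n)}` have full entropy
`n·H(p)`. -/
theorem stmt12 {F : Type*} [Field F] [CharZero F] [Countable F] {m : ℕ}
    (a b : Fin m → ℤ) (hab : Function.Injective fun j => (a j, b j))
    (ξ : PMF (Fin m)) (hξ : ∀ j, ξ j ≠ 0) (R : PowerSeries F)
    (hno : ∀ (n : ℕ) (ω ω' : Fin n → Fin m), ω ≠ ω' → ARfun a b R ω ≠ ARfun a b R ω') :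
    ∀ N : ℕ, 1 ≤ N → ∃ n, N ≤ n ∧ Hcoeff ξ a b R n (4 * n) = (n : ℝ) * pmfEntropy ξ :=
  stmt12_general a b ξ R hno
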